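/- arXiv:1309.2141 — 4 statements merged into one kernel-verified Lean document; each statement's English description precedes it below -/
import Mathlib

section
/- The function k ↦ (π²/4) · ((k+2)/(k+1)) · ((1/4)(k+1)(2k+3)(2k+4)(2k+5))^(-1/(k+2)), viewed as a function of a real variable k, is strictly increasing for k ≥ 2. -/
/-!
Write the function as `(π²/4) · (k+2)/(k+1) · P(k)^(-1/(k+2))` with `P` the quartic. Its derivative
is a positive factor times `log P(k) - (k+2)/(k+1) - (k+2) P'(k)/P(k)`. For `k ≥ 2` the subtracted
terms are at most `23/4`, while `P(k) ≥ P(2) = 378 > exp (23/4)`.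
-/

open Real Set

theorem hasDerivAt_mul_div_mul_rpow_neg_inv (a : ℝ) {p : ℝ → ℝ} {p' x : ℝ}
    (hp : HasDerivAt p p' x) (hpx : 0 < p x) (hx : 0 < x + 1) :
    HasDerivAt (fun k => a * ((k + 2) / (k + 1)) * p k ^ (-1 / (k + 2)))
      (a * p x ^ (-1 / (x + 2)) *
        ((log (p x) - (x + 2) / (x + 1) - (x + 2) * p' / p x) / ((x + 1) * (x + 2)))) x := by
  have hx2 : x + 2 ≠ 0 := by linarith
  have hratio := (((hasDerivAt_id x).add_const 2).fun_div ((hasDerivAt_id x).add_const 1)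
    hx.ne').const_mul a
  have hexpo := (hasDerivAt_const x (-1 : ℝ)).fun_div ((hasDerivAt_id x).add_const 2) hx2
  refine (hratio.fun_mul (hp.rpow hexpo hpx)).congr_deriv ?_
  simp only [id, rpow_sub_one hpx.ne']
  field_simp
  ring

theorem exp_twentyThree_div_four_lt : exp (23 / 4) < 378 := by
  have h : exp (23 / 4) ^ 4 < 378 ^ 4 := calc
    exp (23 / 4) ^ 4 = exp 1 ^ 23 := by rw [← exp_nat_mul, ← exp_nat_mul]; norm_num
    _ < 2.72 ^ 23 := by gcongr; exact exp_one_lt_d9.trans (by norm_num)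
    _ < 378 ^ 4 := by norm_num
  exact lt_of_pow_lt_pow_left₀ 4 (by norm_num) h

noncomputable def quartic (k : ℝ) : ℝ := 1 / 4 * (k + 1) * (2 * k + 3) * (2 * k + 4) * (2 * k + 5)

theorem hasDerivAt_quartic (x : ℝ) :
    HasDerivAt quartic (8 * x ^ 3 + 42 * x ^ 2 + 71 * x + 77 / 2) x := by
  have h := (((((hasDerivAt_id x).add_const 1).const_mul (1 / 4 : ℝ)).fun_mul
    (((hasDerivAt_id x).const_mul 2).add_const 3)).fun_mul
    (((hasDerivAt_id x).const_mul 2).add_const 4)).fun_mul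
    (((hasDerivAt_id x).const_mul 2).add_const 5)
  exact h.congr_deriv (by simp only [id]; ring)

theorem le_quartic_of_two_le {x : ℝ} (hx : 2 ≤ x) : 378 ≤ quartic x := by
  have ht : 0 ≤ x - 2 := by linarith
  unfold quartic
  nlinarith [pow_nonneg ht 2, pow_nonneg ht 3, pow_nonneg ht 4]

theorem div_add_mul_deriv_div_quartic_le {x : ℝ} (hx : 2 ≤ x) :
    (x + 2) / (x + 1) + (x + 2) * (8 * x ^ 3 + 42 * x ^ 2 + 71 * x + 77 / 2) / quartic x
      ≤ 23 / 4 := by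
  have ht : 0 ≤ x - 2 := by linarith
  have hq : 0 < quartic x := by linarith [le_quartic_of_two_le hx]
  rw [div_add_div _ _ (by linarith) hq.ne', div_le_iff₀ (by positivity)]
  unfold quartic
  nlinarith [pow_nonneg ht 2, pow_nonneg ht 3, pow_nonneg ht 4, pow_nonneg ht 5]

theorem div_add_mul_deriv_div_quartic_lt_log {x : ℝ} (hx : 2 ≤ x) :
    (x + 2) / (x + 1) + (x + 2) * (8 * x ^ 3 + 42 * x ^ 2 + 71 * x + 77 / 2) / quartic x
      < log (quartic x) := calc
  _ ≤ 23 / 4 := div_add_mul_deriv_div_quartic_le hx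
  _ < log 378 := (lt_log_iff_exp_lt (by norm_num)).2 exp_twentyThree_div_four_lt
  _ ≤ log (quartic x) := log_le_log (by norm_num) (le_quartic_of_two_le hx)

theorem stmt_2 :
    StrictMonoOn
      (fun k : ℝ => (π^2/4) * ((k+2)/(k+1)) *
        ((1/4) * (k+1) * (2*k+3) * (2*k+4) * (2*k+5)) ^ (-1/(k+2)))
      (Set.Ici (2:ℝ)) := by
  have hderiv (x : ℝ) (hx : 2 ≤ x) := hasDerivAt_mul_div_mul_rpow_neg_inv (π ^ 2 / 4)
    (hasDerivAt_quartic x) (by linarith [le_quartic_of_two_le hx]) (by linarith)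
  refine strictMonoOn_of_hasDerivWithinAt_pos (convex_Ici 2)
    (fun x hx => (hderiv x hx).continuousAt.continuousWithinAt)
    (fun x hx => (hderiv x (interior_subset hx)).hasDerivWithinAt) fun x hx => ?_
  rw [interior_Ici] at hx
  have hx2 : 2 ≤ x := le_of_lt hx
  have hlog := div_add_mul_deriv_div_quartic_lt_log hx2
  have hq : 0 < quartic x := by linarith [le_quartic_of_two_le hx2]
  exact mul_pos (mul_pos (by positivity) (rpow_pos_of_pos hq _))
    (div_pos (by linarith) (mul_pos (by linarith) (by linarith)))
end

section
/- For all real k ≥ 2, (π²/4) · ((k+2)/(k+1)) · ((1/4)(k+1)(2k+3)(2k+4)(2k+5))^(-1/(k+2)) < π²/4, and the limit of this expression as k → +∞ is π²/4. -/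
/-! With `r = (k+2)/(k+1) = 1 + 1/(k+1)` and `Q` the quartic, the inequality says `r ^ (k+2) < Q`;
but `r ^ (k+2) ≤ exp ((k+2)/(k+1)) ≤ exp 2 < 9 ≤ Q`. For the limit, `r → 1`, and
`Q ^ (-1/(k+2)) = exp (-log Q / (k+2)) → 1` because `log Q = O(log k)`. -/

open Real Filter

lemma one_add_rpow_le_exp_mul {a t : ℝ} (ha : -1 ≤ a) (ht : 0 ≤ t) :
    (1 + a) ^ t ≤ exp (a * t) := by
  rw [exp_mul]
  exact rpow_le_rpow (by linarith) (by linarith [add_one_le_exp a]) ht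

lemma mul_rpow_neg_one_div_lt_one {r Q t : ℝ} (hr : 0 ≤ r) (ht : 0 < t) (h : r ^ t < Q) :
    r * Q ^ (-1 / t) < 1 := by
  have hQ : 0 < Q := (rpow_nonneg hr t).trans_lt h
  have hroot : r < Q ^ t⁻¹ := (lt_rpow_inv_iff_of_pos hr hQ.le ht).2 h
  rw [neg_div, one_div, rpow_neg hQ.le, ← div_eq_mul_inv]
  exact (div_lt_one (hr.trans_lt hroot)).2 hroot

lemma tendsto_log_div_mul_add_of_le_mul_pow {f : ℝ → ℝ} {C b : ℝ} {n : ℕ} (c : ℝ)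
    (hb : 0 < b) (hf : ∀ᶠ x in atTop, 1 ≤ f x ∧ f x ≤ C * x ^ n) :
    Tendsto (fun x => log (f x) / (b * x + c)) atTop (nhds 0) := by
  have hbound : Tendsto (fun x => log C / (b * x + c) + n * (log x ^ 1 / (b * x + c)))
      atTop (nhds 0) := by
    simpa using ((tendsto_const_nhds (x := log C)).div_atTop
      (tendsto_atTop_add_const_right _ c (tendsto_id.const_mul_atTop hb))).add
      ((tendsto_pow_log_div_mul_add_atTop b c 1 hb.ne').const_mul (n : ℝ))
  refine tendsto_of_tendsto_of_tendsto_of_le_of_le' tendsto_const_nhds hbound ?_ ?_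
  · filter_upwards [hf, eventually_gt_atTop (-c / b)] with x hx hxc
    have hden : 0 < b * x + c := by rw [div_lt_iff₀ hb] at hxc; linarith
    exact div_nonneg (log_nonneg hx.1) hden.le
  · filter_upwards [hf, eventually_gt_atTop (-c / b), eventually_gt_atTop 0] with x hx hxc hx0
    have hden : 0 < b * x + c := by rw [div_lt_iff₀ hb] at hxc; linarith
    have hC : 0 < C :=
      pos_of_mul_pos_left (zero_lt_one.trans_le (hx.1.trans hx.2)) (by positivity)
    calc log (f x) / (b * x + c) ≤ log (C * x ^ n) / (b * x + c) := by
          gcongr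
          · linarith [hx.1]
          · exact hx.2
      _ = _ := by rw [log_mul hC.ne' (by positivity), log_pow]; ring

lemma tendsto_rpow_div_mul_add_of_le_mul_pow {f : ℝ → ℝ} {C b : ℝ} {n : ℕ} (a c : ℝ)
    (hb : 0 < b) (hf : ∀ᶠ x in atTop, 1 ≤ f x ∧ f x ≤ C * x ^ n) :
    Tendsto (fun x => f x ^ (a / (b * x + c))) atTop (nhds 1) := by
  have hexp := (continuous_exp.tendsto _).comp
    ((tendsto_log_div_mul_add_of_le_mul_pow c hb hf).const_mul a)
  rw [mul_zero, exp_zero] at hexp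
  refine hexp.congr' ?_
  filter_upwards [hf] with x hx
  rw [rpow_def_of_pos (by linarith [hx.1])]
  simp only [Function.comp_apply]
  ring_nf

lemma quartic_factor_bounds {k : ℝ} (hk : 1 ≤ k) :
    1 ≤ (1/4) * (k+1) * (2*k+3) * (2*k+4) * (2*k+5) ∧
      (1/4) * (k+1) * (2*k+3) * (2*k+4) * (2*k+5) ≤ 105 * k ^ 4 := by
  constructor
  · calc (1:ℝ) ≤ 1/4 * (1+1) * (2*1+3) * (2*1+4) * (2*1+5) := by norm_num
      _ ≤ _ := by gcongr
  · calc (1/4) * (k+1) * (2*k+3) * (2*k+4) * (2*k+5) ≤ 1/4 * (2*k) * (5*k) * (6*k) * (7*k) := by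
          gcongr <;> linarith
      _ = 105 * k ^ 4 := by ring

lemma exp_two_lt_nine : exp 2 < 9 := by
  have h := exp_one_lt_d9
  have : exp 2 = exp 1 ^ 2 := by rw [← exp_nat_mul]; norm_num
  rw [this]
  nlinarith [exp_pos 1]

theorem stmt_3 :
    (∀ k : ℝ, 2 ≤ k →
      (π^2/4) * ((k+2)/(k+1)) *
        ((1/4) * (k+1) * (2*k+3) * (2*k+4) * (2*k+5)) ^ (-1/(k+2)) < π^2/4) ∧
    Filter.Tendsto
      (fun k : ℝ => (π^2/4) * ((k+2)/(k+1)) *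
        ((1/4) * (k+1) * (2*k+3) * (2*k+4) * (2*k+5)) ^ (-1/(k+2)))
      Filter.atTop (nhds (π^2/4)) := by
  constructor
  · intro k hk
    have hratio : (k+2)/(k+1) = 1 + 1/(k+1) := by field_simp; ring
    have hpow : ((k+2)/(k+1)) ^ (k+2) < (1/4) * (k+1) * (2*k+3) * (2*k+4) * (2*k+5) :=
      calc ((k+2)/(k+1)) ^ (k+2) ≤ exp (1/(k+1) * (k+2)) := by
            rw [hratio]
            exact one_add_rpow_le_exp_mul (by linarith [one_div_pos.2 (by linarith : 0 < k+1)])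
              (by linarith)
        _ ≤ exp 2 := by
            gcongr
            rw [div_mul_eq_mul_div, one_mul, div_le_iff₀ (by linarith)]
            linarith
        _ < 9 := exp_two_lt_nine
        _ ≤ _ := by
          calc (9:ℝ) ≤ 1/4 * (2+1) * (2*2+3) * (2*2+4) * (2*2+5) := by norm_num
            _ ≤ _ := by gcongr
    rw [mul_assoc]
    exact mul_lt_of_lt_one_right (by positivity)
      (mul_rpow_neg_one_div_lt_one (by positivity) (by linarith) hpow)
  · have hratio : Tendsto (fun k : ℝ => (k+2)/(k+1)) atTop (nhds 1) := by
      have := tendsto_const_nhds (x := (1:ℝ)).add ((tendsto_const_nhds (x := (1:ℝ))).div_atTop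
        (tendsto_atTop_add_const_right atTop 1 tendsto_id))
      rw [add_zero] at this
      refine this.congr' ?_
      filter_upwards [eventually_gt_atTop 0] with k hk
      simp only [id]
      field_simp
      ring
    have hroot := tendsto_rpow_div_mul_add_of_le_mul_pow (n := 4) (-1) 2 one_pos
      (eventually_ge_atTop 1 |>.mono fun k hk => quartic_factor_bounds hk)
    simpa using (tendsto_const_nhds.mul hratio).mul hroot
end

section
/- For all real t ≥ 1, all real α ≥ 3/2, and every integer k ≥ 2: (t^(k+1)/(k+1) − α)² ≥ (1/(k+1)²) · ((3(k+1)/2 − 1)/((3(k+1)/2)^(1/(k+1)) − 1))² · (t − (α(k+1))^(1/(k+1)))². -/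
theorem stmt_6 (k : ℕ) (hk : 2 ≤ k) (α t : ℝ) (hα : 3/2 ≤ α) (ht : 1 ≤ t) :
    (1/((k:ℝ)+1)^2) *
      ((3*((k:ℝ)+1)/2 - 1) / ((3*((k:ℝ)+1)/2) ^ (1/((k:ℝ)+1)) - 1))^2 *
      (t - (α*((k:ℝ)+1)) ^ (1/((k:ℝ)+1)))^2
    ≤ (t^(k+1)/((k:ℝ)+1) - α)^2 := by
  have hk' : (2:ℝ) ≤ (k:ℝ) := by exact_mod_cast hk
  set N : ℝ := (k:ℝ) + 1 with hNdef
  have hNpos : (0:ℝ) < N := by positivity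
  have hNcast : N = ((k+1 : ℕ) : ℝ) := by push_cast; ring
  set e : ℝ := 1 / N with hedef
  set B : ℝ := 3 * N / 2 with hBdef
  have hBpos : (0:ℝ) < B := by positivity
  have hB1 : 1 < B := by rw [hBdef, hNdef]; linarith
  set x : ℝ := B ^ e with hxdef
  set r : ℝ := (α * N) ^ e with hrdef
  have hepos : 0 < e := by positivity
  have hx1 : 1 < x := by
    rw [hxdef]
    exact (Real.one_lt_rpow_iff_of_pos hBpos).mpr (Or.inl ⟨hB1, hepos⟩)
  have hxn : x ^ (k+1) = B := by
    rw [hxdef, ← Real.rpow_natCast (B ^ e), ← Real.rpow_mul hBpos.le]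
    rw [show e * ((k+1:ℕ):ℝ) = 1 by rw [hedef, ← hNcast]; field_simp]
    exact Real.rpow_one B
  have hBA : B ≤ α * N := by rw [hBdef]; nlinarith
  have hApos : 0 < α * N := lt_of_lt_of_le hBpos hBA
  have hxr : x ≤ r := Real.rpow_le_rpow hBpos.le hBA hepos.le
  have hrn : r ^ (k+1) = α * N := by
    rw [hrdef, ← Real.rpow_natCast ((α*N) ^ e), ← Real.rpow_mul hApos.le]
    rw [show e * ((k+1:ℕ):ℝ) = 1 by rw [hedef, ← hNcast]; field_simp]
    exact Real.rpow_one _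
  set S : ℝ := ∑ i ∈ Finset.range (k+1), t ^ i * r ^ (k + 1 - 1 - i) with hSdef
  set C : ℝ := ∑ i ∈ Finset.range (k+1), x ^ i with hCdef
  have hC0 : 0 ≤ C := Finset.sum_nonneg fun i _ => by positivity
  have hCeq : (B - 1) / (x - 1) = C := by
    rw [hCdef, geom_sum_eq hx1.ne' (k+1), hxn]
  have hCS : C ≤ S := by
    rw [hCdef, ← Finset.sum_range_reflect (fun i => x ^ i) (k+1), hSdef]
    apply Finset.sum_le_sum
    intro i hi
    have h1 : x ^ (k + 1 - 1 - i) ≤ r ^ (k + 1 - 1 - i) :=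
      pow_le_pow_left₀ (by positivity) hxr _
    have h2 : (1:ℝ) ≤ t ^ i := one_le_pow₀ ht
    calc x ^ (k + 1 - 1 - i) = 1 * x ^ (k + 1 - 1 - i) := (one_mul _).symm
      _ ≤ t ^ i * r ^ (k + 1 - 1 - i) :=
        mul_le_mul h2 h1 (by positivity) (by positivity)
  have key : t ^ (k+1) - α * N = S * (t - r) := by
    rw [← hrn]; exact (geom_sum₂_mul t r (k+1)).symm
  have h1 : t ^ (k+1) / N - α = S * (t - r) / N := by
    rw [← key]; field_simp
  rw [h1]
  calc (1/N^2) * ((B - 1) / (x - 1))^2 * (t - r)^2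
      = ((B - 1) / (x - 1))^2 * (t - r)^2 / N^2 := by ring
    _ ≤ S^2 * (t - r)^2 / N^2 := by
        apply div_le_div_of_nonneg_right ?_ (by positivity)
        exact mul_le_mul_of_nonneg_right
          (by rw [hCeq]; exact pow_le_pow_left₀ hC0 hCS 2) (sq_nonneg _)
    _ = (S * (t - r) / N)^2 := by rw [div_pow, mul_pow]
end

section
/- With u(t) = (2/√(3ρ))·cos²(πt/(2ρ)) on |t| < ρ and 0 otherwise, and for any real α: ∫_{-∞}^{∞} (t³/3 − α)² u(t)² dt = α² + ((4π⁶ − 210π⁴ + 4410π² − 26775)/(252π⁶))·ρ⁶. -/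
/-!
On its support u² = (4/(3ρ)) cos⁴(πt/(2ρ)), and the substitution t = ρs reduces the integral to the
moments ∫₋₁¹ sᵏ cos⁴(πs/2) ds for k = 0, 3, 6. The odd moment vanishes. Linearizing
cos⁴(πs/2) = 3/8 + cos(πs)/2 + cos(2πs)/8 turns the other two into integrals of cos(cs) and
s⁶ cos(cs), the latter having an explicit primitive (six integrations by parts).
-/

open Real MeasureTheory

lemma integral_ite_abs_lt {E : Type*} [NormedAddCommGroup E] [NormedSpace ℝ E]
    {ρ : ℝ} (hρ : 0 ≤ ρ) (f : ℝ → E) :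
    ∫ t, (if |t| < ρ then f t else 0) = ∫ t in -ρ..ρ, f t := by
  have h : (fun t => if |t| < ρ then f t else 0) = (Set.Ioo (-ρ) ρ).indicator f := by
    ext t
    simp [Set.indicator_apply, abs_lt]
  rw [h, integral_indicator measurableSet_Ioo, ← integral_Ioc_eq_integral_Ioo,
    intervalIntegral.integral_of_le (by linarith)]

lemma integral_eq_zero_of_odd {E : Type*} [NormedAddCommGroup E] [NormedSpace ℝ E]
    {f : ℝ → E} (hf : ∀ x, f (-x) = -f x) (a : ℝ) : ∫ x in -a..a, f x = 0 := by
  have h := intervalIntegral.integral_comp_neg (a := -a) (b := a) f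
  simp only [hf, intervalIntegral.integral_neg, neg_neg] at h
  have h2 : (2 : ℝ) • ∫ x in -a..a, f x = 0 := by
    rw [two_smul]
    nth_rewrite 1 [← h]
    exact neg_add_cancel _
  simpa using h2

lemma cos_pow_four (x : ℝ) : cos x ^ 4 = 3/8 + cos (2*x)/2 + cos (4*x)/8 := by
  have h2 := cos_sq x
  have h4 : cos (2*x) ^ 2 = 1/2 + cos (4*x)/2 := by rw [cos_sq]; ring_nf
  linear_combination (cos x ^ 2 + 1/2 + cos (2*x)/2) * h2 + h4/4

lemma hasDerivAt_pow_six_mul_cos_primitive {c : ℝ} (hc : c ≠ 0) (s : ℝ) :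
    HasDerivAt (fun s => (s^6/c - 30*s^4/c^3 + 360*s^2/c^5 - 720/c^7) * sin (c*s)
        + (6*s^5/c^2 - 120*s^3/c^4 + 720*s/c^6) * cos (c*s)) (s^6 * cos (c*s)) s := by
  have hcs : HasDerivAt (fun s => c*s) c s := by simpa using (hasDerivAt_id s).const_mul c
  have hP : HasDerivAt (fun s => s^6/c - 30*s^4/c^3 + 360*s^2/c^5 - 720/c^7)
      (6*s^5/c - 120*s^3/c^3 + 720*s/c^5) s :=
    (((((hasDerivAt_pow 6 s).div_const c).sub
      (((hasDerivAt_pow 4 s).const_mul 30).div_const (c^3))).add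
      (((hasDerivAt_pow 2 s).const_mul 360).div_const (c^5))).sub_const (720/c^7)).congr_deriv
      (by norm_num; ring)
  have hQ : HasDerivAt (fun s => 6*s^5/c^2 - 120*s^3/c^4 + 720*s/c^6)
      (30*s^4/c^2 - 360*s^2/c^4 + 720/c^6) s :=
    (((((hasDerivAt_pow 5 s).const_mul 6).div_const (c^2)).sub
      (((hasDerivAt_pow 3 s).const_mul 120).div_const (c^4))).add
      (((hasDerivAt_id s).const_mul 720).div_const (c^6))).congr_deriv (by norm_num; ring)
  refine ((hP.mul hcs.sin).add (hQ.mul hcs.cos)).congr_deriv ?_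
  field_simp
  ring

lemma integral_pow_six_mul_cos {c : ℝ} (hc : c ≠ 0) :
    ∫ s in (-1)..1, s^6 * cos (c*s) =
      2 * ((1/c - 30/c^3 + 360/c^5 - 720/c^7) * sin c + (6/c^2 - 120/c^4 + 720/c^6) * cos c) := by
  rw [intervalIntegral.integral_eq_sub_of_hasDerivAt
    (fun s _ => hasDerivAt_pow_six_mul_cos_primitive hc s)
    (Continuous.intervalIntegrable (by fun_prop) _ _)]
  simp only [mul_neg, mul_one, sin_neg, cos_neg]
  ring

lemma integral_cos_mul {c : ℝ} (hc : c ≠ 0) : ∫ s in (-1)..1, cos (c*s) = 2 * sin c / c := by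
  simp only [intervalIntegral.integral_comp_mul_left _ hc, integral_cos, mul_neg, mul_one, sin_neg,
    smul_eq_mul]
  ring

lemma cos_half_pi_mul_pow_four (s : ℝ) :
    cos (π*s/2) ^ 4 = 3/8 + 1/2 * cos (π*s) + 1/8 * cos ((2*π)*s) := by
  rw [cos_pow_four]
  ring_nf

lemma integral_cos_half_pi_mul_pow_four : ∫ s in (-1)..1, cos (π*s/2) ^ 4 = 3/4 := by
  simp_rw [cos_half_pi_mul_pow_four]
  rw [intervalIntegral.integral_add, intervalIntegral.integral_add,
    intervalIntegral.integral_const_mul, intervalIntegral.integral_const_mul,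
    integral_cos_mul pi_ne_zero, integral_cos_mul (by positivity)]
  · norm_num
  all_goals exact Continuous.intervalIntegrable (by fun_prop) _ _

lemma integral_pow_three_mul_cos_half_pi_mul_pow_four :
    ∫ s in (-1)..1, s^3 * cos (π*s/2) ^ 4 = 0 :=
  integral_eq_zero_of_odd (fun s => by simp [neg_div, Odd.neg_pow (by decide : Odd 3)]) 1

lemma integral_pow_six_mul_cos_half_pi_mul_pow_four :
    ∫ s in (-1)..1, s^6 * cos (π*s/2) ^ 4 =
      3/28 - 45/(8*π^2) + 945/(8*π^4) - 11475/(16*π^6) := by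
  have h (s : ℝ) : s^6 * cos (π*s/2) ^ 4
      = 3/8 * s^6 + 1/2 * (s^6 * cos (π*s)) + 1/8 * (s^6 * cos ((2*π)*s)) := by
    rw [cos_half_pi_mul_pow_four]
    ring
  simp_rw [h]
  rw [intervalIntegral.integral_add, intervalIntegral.integral_add,
    intervalIntegral.integral_const_mul, intervalIntegral.integral_const_mul,
    intervalIntegral.integral_const_mul,
    integral_pow_six_mul_cos pi_ne_zero, integral_pow_six_mul_cos (by positivity)]
  · norm_num [integral_pow]
    field_simp
    ring
  all_goals exact Continuous.intervalIntegrable (by fun_prop) _ _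

lemma integral_sq_cubic_mul_cos_half_pi_mul_pow_four (a b : ℝ) :
    ∫ s in (-1)..1, (a*s^3 - b)^2 * cos (π*s/2) ^ 4 =
      3/4 * b^2 + a^2 * (3/28 - 45/(8*π^2) + 945/(8*π^4) - 11475/(16*π^6)) := by
  have h (s : ℝ) : (a*s^3 - b)^2 * cos (π*s/2) ^ 4 = a^2 * (s^6 * cos (π*s/2) ^ 4)
      - 2*a*b * (s^3 * cos (π*s/2) ^ 4) + b^2 * cos (π*s/2) ^ 4 := by ring
  simp_rw [h]
  rw [intervalIntegral.integral_add, intervalIntegral.integral_sub,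
    intervalIntegral.integral_const_mul, intervalIntegral.integral_const_mul,
    intervalIntegral.integral_const_mul, integral_pow_six_mul_cos_half_pi_mul_pow_four,
    integral_pow_three_mul_cos_half_pi_mul_pow_four, integral_cos_half_pi_mul_pow_four]
  · ring
  all_goals exact Continuous.intervalIntegrable (by fun_prop) _ _

theorem stmt_16 (ρ α : ℝ) (hρ : 0 < ρ) :
    ∫ t : ℝ,
      (t^3/3 - α)^2 *
        (if |t| < ρ then (2/Real.sqrt (3*ρ)) * Real.cos (π*t/(2*ρ))^2 else 0)^2
      = α^2 + ((4*π^6 - 210*π^4 + 4410*π^2 - 26775)/(252*π^6)) * ρ^6 := by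
  have hsqrt : (2 / √(3*ρ))^2 = 4/(3*ρ) := by rw [div_pow, sq_sqrt (by positivity)]; norm_num
  calc _ = ∫ t in -ρ..ρ, (t^3/3 - α)^2 * ((2/√(3*ρ)) * cos (π*t/(2*ρ))^2)^2 := by
        rw [← integral_ite_abs_lt hρ.le]
        congr with t
        split_ifs <;> ring
    _ = ρ * ∫ s in (-1)..1, ((ρ*s)^3/3 - α)^2 * ((2/√(3*ρ)) * cos (π*(ρ*s)/(2*ρ))^2)^2 := by
        have h := intervalIntegral.smul_integral_comp_mul_left (a := -1) (b := 1)
          (fun t => (t^3/3 - α)^2 * ((2/√(3*ρ)) * cos (π*t/(2*ρ))^2)^2) ρ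
        rw [smul_eq_mul, mul_neg, mul_one] at h
        exact h.symm
    _ = 4/3 * ∫ s in (-1)..1, (ρ^3/3 * s^3 - α)^2 * cos (π*s/2) ^ 4 := by
        rw [← intervalIntegral.integral_const_mul, ← intervalIntegral.integral_const_mul]
        congr with s
        have hangle : π*(ρ*s)/(2*ρ) = π*s/2 := by field_simp
        rw [hangle, mul_pow (2/√(3*ρ)), hsqrt]
        field_simp
    _ = _ := by
        rw [integral_sq_cubic_mul_cos_half_pi_mul_pow_four]
        field_simp
        ring
end
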